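/- arXiv:1803.02834 — 6 statements merged into one kernel-verified Lean document; each statement's English description precedes it below -/
import Mathlib

section
/- Let d ≥ 1, let v ∈ ℂ^d be a unit vector and let P := v vᴴ be the associated rank-one projection (the d×d matrix with entries P(i,j) = v(i)·conj(v(j))). Let σ be a density matrix (of size d×d) whose support is orthogonal to v, i.e. σ.mulVec v = 0. Then for every real F with 0 ≤ F ≤ 1, the matrix ρ := F•P + (1−F)•σ satisfies ‖P − ρ‖₁ = 2(1−F). -/
open Matrix
open scoped ComplexOrder

open Classical in
/-- Positive semidefinite square root of a matrix (zero if not PSD). -/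
noncomputable def msqrt {n : Type*} [Fintype n] [DecidableEq n] (A : Matrix n n ℂ) :
    Matrix n n ℂ :=
  if h : A.PosSemidef then
    (h.1.eigenvectorUnitary : Matrix n n ℂ) * diagonal ((↑) ∘ (√·) ∘ h.1.eigenvalues) *
      (star h.1.eigenvectorUnitary : Matrix n n ℂ) else 0

/-- Trace norm of a complex square matrix: `Tr √(Aᴴ A)`. -/
noncomputable def traceNorm {n : Type*} [Fintype n] [DecidableEq n] (A : Matrix n n ℂ) : ℝ :=
  ((msqrt (Aᴴ * A)).trace).re

/-!
If `A` and `B` are positive semidefinite with `B A = 0`, then also `A B = 0`, so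
`(A - B)ᴴ (A - B) = (A + B)²` and `A + B` is the square root of it; hence
`‖A - B‖₁ = Tr A + Tr B`. For `A = (1 - F) P` and `B = (1 - F) σ` this gives `2 (1 - F)`.
-/

section

variable {n : Type*} [Fintype n] [DecidableEq n]

open scoped MatrixOrder in
theorem msqrt_eq_of_mul_self {A S : Matrix n n ℂ} (hS : S.PosSemidef) (h : S * S = A) :
    msqrt A = S := by
  have hA : A.PosSemidef := by
    simpa only [hS.isHermitian.eq, h] using posSemidef_conjTranspose_mul_self S
  have hsqrt : CFC.sqrt A = S := CFC.sqrt_unique h hS.nonneg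
  rw [msqrt, dif_pos hA]
  -- the CFC square root of a Hermitian matrix unfolds to the eigenbasis formula of `msqrt`
  rwa [CFC.sqrt_eq_real_sqrt _ hA.nonneg, cfcₙ_eq_cfc, hA.1.cfc_eq, IsHermitian.cfc,
    Unitary.conjStarAlgAut_apply] at hsqrt

theorem traceNorm_sub_of_mul_eq_zero {A B : Matrix n n ℂ} (hA : A.PosSemidef)
    (hB : B.PosSemidef) (hBA : B * A = 0) : traceNorm (A - B) = (A.trace + B.trace).re := by
  have hAB : A * B = 0 := by
    simpa [hA.isHermitian.eq, hB.isHermitian.eq] using congrArg conjTranspose hBA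
  have hsq : (A + B) * (A + B) = (A - B)ᴴ * (A - B) := by
    rw [conjTranspose_sub, hA.isHermitian.eq, hB.isHermitian.eq]
    simp only [add_mul, mul_add, sub_mul, mul_sub, hAB, hBA]
    abel
  rw [traceNorm, msqrt_eq_of_mul_self (hA.add hB) hsq, trace_add]

end

theorem trace_dist_projector_mix_general (d : ℕ) (v : Fin d → ℂ)
    (hv : ∑ i, (starRingEnd ℂ) (v i) * v i = 1)
    (P : Matrix (Fin d) (Fin d) ℂ) (hP : P = Matrix.of fun i j => v i * (starRingEnd ℂ) (v j))
    (σ : Matrix (Fin d) (Fin d) ℂ) (hσ : σ.PosSemidef) (hσtr : σ.trace = 1)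
    (hσv : σ.mulVec v = 0) (F : ℝ) (hF1 : F ≤ 1) :
    traceNorm (P - (F • P + (1 - F) • σ)) = 2 * (1 - F) := by
  replace hP : P = vecMulVec v (star v) := hP
  have hPpsd : P.PosSemidef := hP ▸ posSemidef_vecMulVec_self_star v
  have hPtr : P.trace = 1 := by rw [hP, trace_vecMulVec, dotProduct_comm, ← hv]; rfl
  have hσP : σ * P = 0 := by rw [hP, mul_vecMulVec, hσv, zero_vecMulVec]
  have hF : (0 : ℝ) ≤ 1 - F := sub_nonneg.mpr hF1
  have hdiff : P - (F • P + (1 - F) • σ) = (1 - F) • P - (1 - F) • σ := by module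
  rw [hdiff, traceNorm_sub_of_mul_eq_zero (hPpsd.smul hF) (hσ.smul hF)
    (by rw [smul_mul_smul_comm, hσP, smul_zero]), trace_smul, trace_smul, hPtr, hσtr]
  simp only [Complex.add_re, Complex.smul_re, Complex.one_re, smul_eq_mul]
  ring

theorem trace_dist_projector_mix (d : ℕ) (hd : 1 ≤ d) (v : Fin d → ℂ)
    (hv : ∑ i, (starRingEnd ℂ) (v i) * v i = 1)
    (P : Matrix (Fin d) (Fin d) ℂ) (hP : P = Matrix.of fun i j => v i * (starRingEnd ℂ) (v j))
    (σ : Matrix (Fin d) (Fin d) ℂ) (hσ : σ.PosSemidef) (hσtr : σ.trace = 1)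
    (hσv : σ.mulVec v = 0) (F : ℝ) (hF0 : 0 ≤ F) (hF1 : F ≤ 1) :
    traceNorm (P - (F • P + (1 - F) • σ)) = 2 * (1 - F) :=
  trace_dist_projector_mix_general d v hv P hP σ hσ hσtr hσv F hF1
end

section
/- Let d ≥ 1 and let Γ be a ℂ-linear map on d×d complex matrices that is unitarily covariant, i.e. Γ(U X Uᴴ) = U Γ(X) Uᴴ for every d×d unitary matrix U and every d×d complex matrix X. Define the ampliation id⊗Γ as the linear map on complex matrices indexed by (Fin d × Fin d) given by ((id⊗Γ)M)((i,k),(j,l)) := (Γ(M_{i,j}))(k,l), where M_{i,j} is the d×d matrix with entries (M_{i,j})(a,b) = M((i,a),(j,b)). Then for every d×d unitary matrix U, (U ⊗ Ū) · (id⊗Γ)(Φ_d) · (U ⊗ Ū)ᴴ = (id⊗Γ)(Φ_d), where Ū denotes the entrywise complex conjugate of U and ⊗ denotes the Kronecker product of matrices. -/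
open Matrix
open scoped Kronecker

/-- The maximally entangled projector `Φ_d`. -/
noncomputable def maxEnt (d : ℕ) : Matrix (Fin d × Fin d) (Fin d × Fin d) ℂ :=
  Matrix.of fun p q => if p.1 = p.2 ∧ q.1 = q.2 then 1 / (d : ℂ) else 0

/-- The ampliation `id ⊗ Γ` of a linear map `Γ` on `d × d` matrices. -/
noncomputable def ampliation {d : ℕ}
    (Γ : Matrix (Fin d) (Fin d) ℂ →ₗ[ℂ] Matrix (Fin d) (Fin d) ℂ)
    (M : Matrix (Fin d × Fin d) (Fin d × Fin d) ℂ) :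
    Matrix (Fin d × Fin d) (Fin d × Fin d) ℂ :=
  Matrix.of fun p q => (Γ (Matrix.of fun a b => M (p.1, a) (q.1, b))) p.2 q.2

private lemma conj_mem_unitary {d : ℕ} {U : Matrix (Fin d) (Fin d) ℂ}
    (hU : U ∈ Matrix.unitaryGroup (Fin d) ℂ) :
    U.map (starRingEnd ℂ) ∈ Matrix.unitaryGroup (Fin d) ℂ := by
  rw [Matrix.mem_unitaryGroup_iff] at hU ⊢
  have hstar : star (U.map (starRingEnd ℂ)) = Uᵀ := by
    ext i j
    simp [Matrix.star_eq_conjTranspose, Matrix.conjTranspose_apply, Matrix.map_apply]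
  rw [hstar]
  have h1 : U.map (starRingEnd ℂ) * Uᵀ = (U * star U).map (starRingEnd ℂ) := by
    rw [Matrix.map_mul]
    congr 1
    ext i j
    simp [Matrix.star_eq_conjTranspose, Matrix.conjTranspose_apply, Matrix.map_apply]
  rw [h1, hU, Matrix.map_one _ (map_zero _) (map_one _)]

private noncomputable def B {d : ℕ} (p r : Fin d) : Matrix (Fin d) (Fin d) ℂ :=
  (1/(d:ℂ)) • Matrix.single p r (1 : ℂ)

private lemma key_sum {d : ℕ} {U : Matrix (Fin d) (Fin d) ℂ}
    (hU : U ∈ Matrix.unitaryGroup (Fin d) ℂ) (i j : Fin d) :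
    ∑ p : Fin d, ∑ r : Fin d, (U i p * (starRingEnd ℂ) (U j r)) •
        (U.map (starRingEnd ℂ) * B p r * (U.map (starRingEnd ℂ))ᴴ)
      = B i j := by
  have hUU : U * Uᴴ = 1 := by
    have := Matrix.mem_unitaryGroup_iff.mp hU
    rwa [Matrix.star_eq_conjTranspose] at this
  have hVV : U.map (starRingEnd ℂ) * (U.map (starRingEnd ℂ))ᴴ = 1 := by
    have := Matrix.mem_unitaryGroup_iff.mp (conj_mem_unitary hU)
    rwa [Matrix.star_eq_conjTranspose] at this
  ext a b
  have hentry : ∀ p r : Fin d,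
      (U.map (starRingEnd ℂ) * B p r * (U.map (starRingEnd ℂ))ᴴ) a b
      = (1/(d:ℂ)) * ((starRingEnd ℂ) (U a p) * U b r) := by
    intro p r
    simp [B, Matrix.mul_apply, Matrix.single, Matrix.conjTranspose_apply,
      Matrix.map_apply, Finset.mul_sum, Finset.sum_mul, ite_and]
    ring
  simp only [Matrix.sum_apply, Matrix.smul_apply, hentry, smul_eq_mul]
  calc ∑ p : Fin d, ∑ r : Fin d, U i p * (starRingEnd ℂ) (U j r) *
          ((1/(d:ℂ)) * ((starRingEnd ℂ) (U a p) * U b r))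
      = ∑ p : Fin d, ∑ r : Fin d, (1/(d:ℂ)) *
          ((U i p * (starRingEnd ℂ) (U a p)) * ((starRingEnd ℂ) (U j r) * U b r)) := by
        refine Finset.sum_congr rfl fun p _ => Finset.sum_congr rfl fun r _ => ?_
        ring
    _ = (1/(d:ℂ)) * ((∑ p : Fin d, U i p * (starRingEnd ℂ) (U a p)) *
          (∑ r : Fin d, (starRingEnd ℂ) (U j r) * U b r)) := by
        rw [Finset.sum_mul_sum, Finset.mul_sum]
        exact Finset.sum_congr rfl fun p _ => (Finset.mul_sum _ _ _).symm
  have h1 : ∑ p : Fin d, U i p * (starRingEnd ℂ) (U a p) = (1 : Matrix (Fin d) (Fin d) ℂ) i a := by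
    rw [← hUU]
    simp only [Matrix.mul_apply, Matrix.conjTranspose_apply]
    exact Finset.sum_congr rfl fun p _ => by rw [starRingEnd_apply]
  have h2 : ∑ r : Fin d, (starRingEnd ℂ) (U j r) * U b r
      = (1 : Matrix (Fin d) (Fin d) ℂ) j b := by
    rw [← hVV]
    simp only [Matrix.mul_apply, Matrix.conjTranspose_apply, Matrix.map_apply,
      starRingEnd_apply, star_star]
  rw [h1, h2]
  by_cases hia : i = a <;> by_cases hjb : j = b <;>
    simp [B, hia, hjb, Matrix.one_apply, Matrix.single, Ne.symm]

theorem ampliation_maxEnt_twirling_invariant (d : ℕ) (hd : 1 ≤ d)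
    (Γ : Matrix (Fin d) (Fin d) ℂ →ₗ[ℂ] Matrix (Fin d) (Fin d) ℂ)
    (hΓ : ∀ U ∈ Matrix.unitaryGroup (Fin d) ℂ, ∀ X : Matrix (Fin d) (Fin d) ℂ,
      Γ (U * X * Uᴴ) = U * Γ X * Uᴴ) :
    ∀ U ∈ Matrix.unitaryGroup (Fin d) ℂ,
      (U ⊗ₖ U.map (starRingEnd ℂ)) * ampliation Γ (maxEnt d) *
          (U ⊗ₖ U.map (starRingEnd ℂ))ᴴ = ampliation Γ (maxEnt d) := by
  intro U hU
  set V := U.map (starRingEnd ℂ) with hV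
  have hVmem : V ∈ Matrix.unitaryGroup (Fin d) ℂ := conj_mem_unitary hU
  have hblock : ∀ i j : Fin d, (Matrix.of fun a b => maxEnt d (i,a) (j,b)) = B i j := by
    intro i j
    ext a b
    simp only [Matrix.of_apply, maxEnt, B, Matrix.smul_apply, Matrix.single,
      smul_eq_mul]
    split <;> simp
  ext ⟨i, k⟩ ⟨j, l⟩
  have hRHS : ampliation Γ (maxEnt d) (i, k) (j, l) = Γ (B i j) k l := by
    simp only [ampliation, Matrix.of_apply]
    rw [hblock]
  have hGsum : Γ (B i j)
      = ∑ p : Fin d, ∑ r : Fin d, (U i p * (starRingEnd ℂ) (U j r)) •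
          (V * Γ (B p r) * Vᴴ) := by
    conv_lhs => rw [← key_sum hU i j]
    rw [map_sum]
    refine Finset.sum_congr rfl fun p _ => ?_
    rw [map_sum]
    refine Finset.sum_congr rfl fun r _ => ?_
    rw [LinearMap.map_smul, hΓ V hVmem]
  rw [hRHS, hGsum]
  simp only [Matrix.mul_apply, Matrix.conjTranspose_apply, Matrix.kroneckerMap_apply,
    ampliation, Matrix.of_apply, Matrix.sum_apply, Matrix.smul_apply, smul_eq_mul]
  rw [Finset.sum_comm]
  rw [Fintype.sum_prod_type]
  refine Finset.sum_congr rfl fun p _ => ?_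
  simp only [Fintype.sum_prod_type, Finset.sum_mul, Finset.mul_sum]
  rw [Finset.sum_comm]
  refine Finset.sum_congr rfl fun q _ => ?_
  refine Finset.sum_congr rfl fun r _ => ?_
  refine Finset.sum_congr rfl fun s _ => ?_
  rw [hblock]
  simp only [starRingEnd_apply, star_mul']
  ring
end

section
/- Let d ≥ 1 and let ρ be a density matrix indexed by (Fin d × Fin d) that is invariant under all twirling unitaries, i.e. (U ⊗ Ū) ρ (U ⊗ Ū)ᴴ = ρ for every d×d unitary matrix U, where Ū denotes the entrywise complex conjugate of U and ⊗ denotes the Kronecker product. Then ρ is an isotropic state: there exists a real number p such that ρ = (1−p)•Φ_d + (p/d²)•I, where I is the identity matrix indexed by (Fin d × Fin d). -/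
open Matrix
open scoped Kronecker ComplexOrder

/-!
Conjugating `ρ` by diagonal unitaries with a phase `I` at a single index shows that only the
entries `ρ (i, i) (j, j)` and `ρ (i, k) (i, k)` can be nonzero, and conjugating by permutation
matrices shows that these depend only on which indices coincide. Hence
`ρ = y • J + z • 1 + w • D`, where `J = |vec 1⟩⟨vec 1| = d • Φ_d` and `D` is the projection onto
the span of the `|i i⟩`. Since `(U ⊗ Ū) vec 1 = vec (Ū Uᵀ) = vec 1`, both `J` and `1` are
invariant, so `w • D` is invariant as well, and a single real reflection mixing two basis vectors
forces `w = 0`. Hermiticity makes the two remaining coefficients real and the trace fixes them.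
-/

theorem Equiv.Perm.exists_apply_eq_and_apply_eq {α : Type*} [Finite α] {a b c d : α}
    (hab : a ≠ b) (hcd : c ≠ d) : ∃ σ : Perm α, σ a = c ∧ σ b = d := by
  obtain ⟨σ, hσ⟩ := exists_extending_pair ![a, b] ![c, d]
    (injective_pair_iff_ne.mpr hab) (injective_pair_iff_ne.mpr hcd)
  exact ⟨σ, hσ 0, hσ 1⟩

theorem eq_and_eq_or_eq_and_eq_of_forall_phase_eq_one {n : Type*} [DecidableEq n] {i k j l : n}
    (h : ∀ a : n, (if i = a then Complex.I else 1) * star (if k = a then Complex.I else 1) *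
      star (if j = a then Complex.I else 1) * (if l = a then Complex.I else 1) = 1) :
    (i = k ∧ j = l) ∨ (i = j ∧ k = l) := by
  by_cases hik : i = k
  · subst hik
    have hj := h j
    split_ifs at hj <;> norm_num [Complex.ext_iff] at hj <;> grind
  · by_cases hji : j = i
    · subst hji
      have hk := h k
      split_ifs at hk <;> norm_num [Complex.ext_iff] at hk <;> grind
    · have hi := h i
      split_ifs at hi <;> norm_num [Complex.ext_iff] at hi <;> grind

namespace Matrix

theorem IsHermitian.eq_re_smul_add_re_smul {m : Type*} {ρ A B : Matrix m m ℂ}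
    (hρ : ρ.IsHermitian) (hA : A.IsHermitian) (hB : B.IsHermitian) {a b : ℂ}
    (h : ρ = a • A + b • B) : ρ = a.re • A + b.re • B := by
  have h' : ρ = starRingEnd ℂ a • A + starRingEnd ℂ b • B := by
    rw [← hρ.eq, h, conjTranspose_add, conjTranspose_smul, conjTranspose_smul, hA.eq, hB.eq]
    rfl
  calc ρ = (2 : ℂ)⁻¹ • (ρ + ρ) := by module
    _ = ((a + starRingEnd ℂ a) / 2) • A + ((b + starRingEnd ℂ b) / 2) • B := by
      nth_rw 1 [h]; rw [h']; module
    _ = a.re • A + b.re • B := by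
      rw [← Complex.re_eq_add_conj, ← Complex.re_eq_add_conj, Complex.coe_smul, Complex.coe_smul]

variable {n R : Type*} [DecidableEq n]

theorem kronecker_permMatrix [MulZeroOneClass R] (σ τ : Equiv.Perm n) :
    σ.permMatrix R ⊗ₖ τ.permMatrix R = Equiv.Perm.permMatrix R (σ.prodCongr τ) := by
  ext ⟨a, b⟩ ⟨c, e⟩
  simp [PEquiv.toMatrix_apply, ← ite_and, and_comm]

variable (n) in
def unnormMaxEnt : Matrix (n × n) (n × n) ℂ :=
  vecMulVec (vec 1) (star (vec 1))

theorem isHermitian_unnormMaxEnt : (unnormMaxEnt n).IsHermitian := by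
  rw [IsHermitian, unnormMaxEnt, conjTranspose_vecMulVec, star_star]

variable [Fintype n]

theorem permMatrix_mem_unitaryGroup [CommRing R] [StarRing R] (σ : Equiv.Perm n) :
    σ.permMatrix R ∈ unitaryGroup n R := by
  rw [mem_unitaryGroup_iff, star_eq_conjTranspose, conjTranspose_permMatrix, ← permMatrix_mul,
    inv_mul_cancel, permMatrix_one]

theorem one_sub_two_smul_vecMulVec_mem_unitaryGroup [CommRing R] [StarRing R] {v : n → R}
    (hv : star v ⬝ᵥ v = 1) : 1 - (2 : R) • vecMulVec v (star v) ∈ unitaryGroup n R := by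
  set P := vecMulVec v (star v)
  have hP : P * P = P := by rw [vecMulVec_mul_vecMulVec, hv, one_smul]
  have hPs : star P = P := by rw [star_eq_conjTranspose, conjTranspose_vecMulVec, star_star]
  rw [mem_unitaryGroup_iff, star_sub, star_one, star_smul, hPs, star_ofNat]
  simp only [sub_mul, mul_sub, smul_mul_smul, hP, one_mul, mul_one]
  module

theorem kronecker_map_star_mul_diagonal_vec_one_mul_apply (U : Matrix n n ℂ) (a b : n) :
    ((U ⊗ₖ U.map (starRingEnd ℂ)) * diagonal (vec (1 : Matrix n n ℂ)) *
      (U ⊗ₖ U.map (starRingEnd ℂ))ᴴ) (a, b) (a, b) =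
      ∑ c, star (U a c) * U a c * (star (U b c) * U b c) := by
  rw [mul_apply]
  simp only [mul_diagonal, conjTranspose_apply, kroneckerMap_apply, vec, one_apply,
    Fintype.sum_prod_type, map_apply, mul_ite, mul_one, mul_zero, ite_mul, zero_mul,
    Finset.sum_ite_eq', Finset.mem_univ, if_true, star_mul', Complex.star_def, Complex.conj_conj]
  exact Finset.sum_congr rfl fun c _ => by ring

theorem trace_unnormMaxEnt : (unnormMaxEnt n).trace = Fintype.card n := by
  simp [unnormMaxEnt, trace_vecMulVec, dotProduct, one_apply, Fintype.sum_prod_type]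

theorem unnormMaxEnt_eq_smul_maxEnt {d : ℕ} (hd : d ≠ 0) :
    unnormMaxEnt (Fin d) = (d : ℝ) • maxEnt d := by
  ext ⟨i, k⟩ ⟨j, l⟩
  simp [unnormMaxEnt, maxEnt, vecMulVec_apply, one_apply, hd, eq_comm, ← ite_and, and_comm]

def IsTwirlInvariant (ρ : Matrix (n × n) (n × n) ℂ) : Prop :=
  ∀ U ∈ unitaryGroup n ℂ, (U ⊗ₖ U.map (starRingEnd ℂ)) * ρ * (U ⊗ₖ U.map (starRingEnd ℂ))ᴴ = ρ

theorem isTwirlInvariant_one : IsTwirlInvariant (1 : Matrix (n × n) (n × n) ℂ) := fun U hU => by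
  rw [mul_one, ← star_eq_conjTranspose]
  exact Unitary.mul_star_self_of_mem
    (kronecker_mem_unitary hU (map_star_mem_unitaryGroup_iff.mpr hU))

theorem isTwirlInvariant_unnormMaxEnt : IsTwirlInvariant (unnormMaxEnt n) := fun U hU => by
  have hfix : (U ⊗ₖ U.map (starRingEnd ℂ)) *ᵥ vec 1 = vec 1 := by
    rw [kronecker_mulVec_vec, mul_one,
      show U.map (starRingEnd ℂ) * Uᵀ = 1 from
        Unitary.star_mul_self_of_mem (transpose_mem_unitaryGroup_iff.mpr hU)]
  rw [unnormMaxEnt, mul_vecMulVec, vecMulVec_mul, ← star_mulVec, hfix]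

namespace IsTwirlInvariant

variable {ρ ρ' : Matrix (n × n) (n × n) ℂ}

theorem sub (hρ : IsTwirlInvariant ρ) (hρ' : IsTwirlInvariant ρ') : IsTwirlInvariant (ρ - ρ') :=
  fun U hU => by rw [mul_sub, sub_mul, hρ U hU, hρ' U hU]

theorem smul (c : ℂ) (hρ : IsTwirlInvariant ρ) : IsTwirlInvariant (c • ρ) :=
  fun U hU => by rw [Matrix.mul_smul, Matrix.smul_mul, hρ U hU]

theorem phase_mul_apply (hρ : IsTwirlInvariant ρ) {c : n → ℂ} (hc : ∀ b, c b * star (c b) = 1)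
    (i k j l : n) :
    c i * star (c k) * star (c j) * c l * ρ (i, k) (j, l) = ρ (i, k) (j, l) := by
  have hU : diagonal c ∈ unitaryGroup n ℂ := by
    rw [mem_unitaryGroup_iff, star_eq_conjTranspose, diagonal_conjTranspose, diagonal_mul_diagonal]
    exact diagonal_eq_one.mpr (funext hc)
  have := congr_fun₂ (hρ _ hU) (i, k) (j, l)
  rw [diagonal_map (map_zero _), diagonal_kronecker_diagonal, diagonal_conjTranspose,
    mul_diagonal, diagonal_mul] at this
  simp only [Pi.star_apply, star_mul', Complex.star_def, Complex.conj_conj] at this ⊢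
  linear_combination this

theorem apply_eq_zero (hρ : IsTwirlInvariant ρ) {i k j l : n} (h₁ : ¬(i = k ∧ j = l))
    (h₂ : ¬(i = j ∧ k = l)) : ρ (i, k) (j, l) = 0 := by
  by_contra hne
  refine not_or_intro h₁ h₂ (eq_and_eq_or_eq_and_eq_of_forall_phase_eq_one fun a => ?_)
  refine (mul_eq_right₀ hne).mp
    (hρ.phase_mul_apply (c := fun b => if b = a then Complex.I else 1) (fun b => ?_) i k j l)
  split_ifs <;> simp

theorem apply_perm (hρ : IsTwirlInvariant ρ) (σ : Equiv.Perm n) (i k j l : n) :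
    ρ (σ i, σ k) (σ j, σ l) = ρ (i, k) (j, l) := by
  have := congr_fun₂ (hρ _ (permMatrix_mem_unitaryGroup σ)) (i, k) (j, l)
  rw [PEquiv.map_toMatrix, kronecker_permMatrix, conjTranspose_permMatrix,
    PEquiv.toMatrix_toPEquiv_mul, PEquiv.mul_toMatrix_toPEquiv, Equiv.Perm.inv_def,
    Equiv.symm_symm] at this
  simpa using this

theorem exists_eq_smul_unnormMaxEnt_add_smul_one_add_smul_diagonal [Nontrivial n]
    (hρ : IsTwirlInvariant ρ) : ∃ y z w : ℂ,
      ρ = y • unnormMaxEnt n + z • 1 + w • diagonal (vec (1 : Matrix n n ℂ)) := by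
  obtain ⟨i₀, i₁, h₀₁⟩ := exists_pair_ne n
  refine ⟨ρ (i₀, i₀) (i₁, i₁), ρ (i₀, i₁) (i₀, i₁),
    ρ (i₀, i₀) (i₀, i₀) - ρ (i₀, i₀) (i₁, i₁) - ρ (i₀, i₁) (i₀, i₁), ?_⟩
  ext ⟨i, k⟩ ⟨j, l⟩
  simp only [add_apply, smul_apply, unnormMaxEnt, vecMulVec_apply, one_apply, diagonal_apply, vec,
    Pi.star_apply, apply_ite star, star_one, star_zero, Prod.mk.injEq, smul_eq_mul]
  by_cases h₁ : i = k ∧ j = l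
  · obtain ⟨rfl, rfl⟩ := h₁
    rcases eq_or_ne i j with rfl | hij
    · have := hρ.apply_perm (Equiv.swap i₀ i) i₀ i₀ i₀ i₀
      rw [Equiv.swap_apply_left] at this
      simp [this]
    · obtain ⟨σ, rfl, rfl⟩ := Equiv.Perm.exists_apply_eq_and_apply_eq h₀₁ hij
      simp [hρ.apply_perm, hij]
  by_cases h₂ : i = j ∧ k = l
  · obtain ⟨rfl, rfl⟩ := h₂
    have hik : i ≠ k := fun h => h₁ ⟨h, h⟩
    obtain ⟨σ, rfl, rfl⟩ := Equiv.Perm.exists_apply_eq_and_apply_eq h₀₁ hik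
    simp [hρ.apply_perm, hik.symm]
  · rw [hρ.apply_eq_zero h₁ h₂]
    grind

theorem eq_zero_of_smul_diagonal [Nontrivial n] {w : ℂ}
    (hw : IsTwirlInvariant (w • diagonal (vec (1 : Matrix n n ℂ)))) : w = 0 := by
  obtain ⟨a, b, hab⟩ := exists_pair_ne n
  -- Rows `a` and `b` of this reflection both meet column `a`, whereas `D (a, b) (a, b) = 0`.
  set v : n → ℂ := Pi.single a (3 / 5) + Pi.single b (4 / 5)
  have hv : star v ⬝ᵥ v = 1 := by
    norm_num [v, dotProduct_add, hab, hab.symm]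
  set U := 1 - (2 : ℂ) • vecMulVec v (star v)
  have hUa : U a a = 7 / 25 := by norm_num [U, v, vecMulVec_apply, hab]
  have hUb : U b a = -24 / 25 := by norm_num [U, v, vecMulVec_apply, hab, hab.symm]
  have hpos : 0 < ∑ c, star (U a c) * U a c * (star (U b c) * U b c) := by
    refine Finset.sum_pos'
      (fun c _ => mul_nonneg (star_mul_self_nonneg _) (star_mul_self_nonneg _))
      ⟨a, Finset.mem_univ _, mul_pos (star_mul_self_pos ?_) (star_mul_self_pos ?_)⟩ <;>
    simp [isRegular_iff_ne_zero, hUa, hUb]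
  have := congr_fun₂ (hw U (one_sub_two_smul_vecMulVec_mem_unitaryGroup hv)) (a, b) (a, b)
  rw [Matrix.mul_smul, Matrix.smul_mul, smul_apply, smul_apply,
    kronecker_map_star_mul_diagonal_vec_one_mul_apply, diagonal_apply_eq, vec,
    one_apply_ne hab.symm, smul_zero, smul_eq_mul, mul_eq_zero] at this
  exact this.resolve_right hpos.ne'

theorem exists_eq_smul_unnormMaxEnt_add_smul_one (hρ : IsTwirlInvariant ρ) :
    ∃ a b : ℂ, ρ = a • unnormMaxEnt n + b • 1 := by
  cases subsingleton_or_nontrivial n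
  · refine ⟨0, ρ.trace, ?_⟩
    ext p q
    obtain rfl := Subsingleton.elim p q
    simp [trace, Fintype.sum_subsingleton _ p]
  · obtain ⟨y, z, w, rfl⟩ := hρ.exists_eq_smul_unnormMaxEnt_add_smul_one_add_smul_diagonal
    have hD : IsTwirlInvariant (w • diagonal (vec (1 : Matrix n n ℂ))) := by
      convert (hρ.sub (isTwirlInvariant_unnormMaxEnt.smul y)).sub (isTwirlInvariant_one.smul z)
        using 1
      abel
    exact ⟨y, z, by rw [eq_zero_of_smul_diagonal hD, zero_smul, add_zero]⟩

end IsTwirlInvariant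

end Matrix

theorem twirling_invariant_is_isotropic (d : ℕ) (hd : 1 ≤ d)
    (ρ : Matrix (Fin d × Fin d) (Fin d × Fin d) ℂ)
    (hρ : ρ.PosSemidef) (hρtr : ρ.trace = 1)
    (hinv : ∀ U ∈ Matrix.unitaryGroup (Fin d) ℂ,
      (U ⊗ₖ U.map (starRingEnd ℂ)) * ρ * (U ⊗ₖ U.map (starRingEnd ℂ))ᴴ = ρ) :
    ∃ p : ℝ, ρ = (1 - p) • maxEnt d + (p / (d : ℝ) ^ 2) • (1 : Matrix (Fin d × Fin d) (Fin d × Fin d) ℂ) := by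
  obtain ⟨a, b, hab⟩ := IsTwirlInvariant.exists_eq_smul_unnormMaxEnt_add_smul_one hinv
  have hre := hρ.isHermitian.eq_re_smul_add_re_smul isHermitian_unnormMaxEnt isHermitian_one hab
  have htr : a.re * d + b.re * d ^ 2 = 1 := by
    rw [hre, trace_add, trace_smul, trace_smul, trace_unnormMaxEnt, trace_one,
      Fintype.card_prod, Fintype.card_fin] at hρtr
    simpa [sq] using congrArg Complex.re hρtr
  have hd₀ : d ≠ 0 := by omega
  refine ⟨d ^ 2 * b.re, ?_⟩
  rw [hre, unnormMaxEnt_eq_smul_maxEnt hd₀, smul_smul,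
    show 1 - (d : ℝ) ^ 2 * b.re = a.re * d by linarith,
    mul_div_cancel_left₀ _ (pow_ne_zero 2 (Nat.cast_ne_zero.mpr hd₀))]
end

section
/- For every natural number M, the following identity of real numbers holds: (1/2^{M+3}) · ∑_{k=0}^{M} C(M,k) · ( (M−2k−1)/√(k+1) + (M−2k+1)/√(M−k+1) )² + (1/2) · [ (M+2)/2^{M} + ∑_{k=0}^{M} ( ((M−2k)²−1)/2^{M+2} ) · C(M,k) · ( (M+2) − 2√((M−k+1)(k+1)) ) / ( (M−k+1)(k+1) ) ] = 1, where C(M,k) is the binomial coefficient, M−2k and M−2k±1 are computed in the integers, and √ denotes the real square root. -/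
lemma lemA (N : ℕ) : ∑ j ∈ Finset.range (N+1),
    (N.choose j : ℤ) * ((N:ℤ) - 2*j) * ((N:ℤ) - 2*j - 1) = N * 2^N := by
  induction N with
  | zero => simp
  | succ N ih =>
    have hC : (∑ j ∈ Finset.range (N+1), (N.choose j : ℤ)) = 2^N := by
      exact_mod_cast Nat.sum_range_choose N
    have key : ∑ j ∈ Finset.range (N+1+1), ((N+1).choose j : ℤ) * (((N:ℤ)+1) - 2*j) * (((N:ℤ)+1) - 2*j - 1)
        = (∑ j ∈ Finset.range (N+1), ((N.choose j : ℤ) * (((N:ℤ) - 2*j - 1) * ((N:ℤ) - 2*j - 2))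
            + (N.choose (j+1) : ℤ) * (((N:ℤ) - 2*j - 1) * ((N:ℤ) - 2*j - 2)))) + ((N:ℤ)+1)*N := by
      rw [Finset.sum_range_succ']
      congr 1
      · apply Finset.sum_congr rfl; intro j hj
        rw [Nat.choose_succ_succ]
        push_cast; ring
      · simp
    have key2 : ∑ j ∈ Finset.range (N+1), (N.choose (j+1) : ℤ) * (((N:ℤ) - 2*j - 1) * ((N:ℤ) - 2*j - 2))
        = ∑ j ∈ Finset.range (N+1), (N.choose j : ℤ) * (((N:ℤ) - 2*j + 1) * ((N:ℤ) - 2*j)) - ((N:ℤ)+1)*N := by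
      have h2 := Finset.sum_range_succ' (fun j => (N.choose j : ℤ) * (((N:ℤ) - 2*(j:ℤ) + 1) * ((N:ℤ) - 2*j))) (N+1)
      have h3 := Finset.sum_range_succ (fun j => (N.choose j : ℤ) * (((N:ℤ) - 2*(j:ℤ) + 1) * ((N:ℤ) - 2*j))) (N+1)
      have h4 : (N.choose (N+1) : ℤ) = 0 := by simp
      have e : (∑ j ∈ Finset.range (N+1), (N.choose (j+1) : ℤ) * (((N:ℤ) - 2*((j:ℤ)+1) + 1) * ((N:ℤ) - 2*((j:ℤ)+1))))
          = ∑ j ∈ Finset.range (N+1), (N.choose (j+1) : ℤ) * (((N:ℤ) - 2*j - 1) * ((N:ℤ) - 2*j - 2)) := by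
        apply Finset.sum_congr rfl; intro j hj; ring
      simp only [h4] at h3
      push_cast at h2 h3
      rw [h3] at h2
      push_cast at e
      rw [e] at h2
      simp only [Nat.choose_zero_right, Nat.cast_one, one_mul, zero_mul, add_zero, sub_zero] at h2
      linarith
    have sp : ∑ j ∈ Finset.range (N+1), ((N.choose j : ℤ) * (((N:ℤ) - 2*j - 1) * ((N:ℤ) - 2*j - 2))
            + (N.choose j : ℤ) * (((N:ℤ) - 2*j + 1) * ((N:ℤ) - 2*j)))
        = 2 * (N * 2^N) + 2 * 2^N := by
      have e : ∀ j ∈ Finset.range (N+1), ((N.choose j : ℤ) * (((N:ℤ) - 2*j - 1) * ((N:ℤ) - 2*j - 2))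
            + (N.choose j : ℤ) * (((N:ℤ) - 2*j + 1) * ((N:ℤ) - 2*j)))
          = 2 * ((N.choose j : ℤ) * ((N:ℤ) - 2*j) * ((N:ℤ) - 2*j - 1)) + 2 * (N.choose j : ℤ) := by
        intro j _; ring
      rw [Finset.sum_congr rfl e, Finset.sum_add_distrib, ← Finset.mul_sum, ← Finset.mul_sum, ih, hC]
    have split : (∑ j ∈ Finset.range (N+1), ((N.choose j : ℤ) * (((N:ℤ) - 2*j - 1) * ((N:ℤ) - 2*j - 2))
            + (N.choose (j+1) : ℤ) * (((N:ℤ) - 2*j - 1) * ((N:ℤ) - 2*j - 2))))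
        = (∑ j ∈ Finset.range (N+1), (N.choose j : ℤ) * (((N:ℤ) - 2*j - 1) * ((N:ℤ) - 2*j - 2)))
          + ∑ j ∈ Finset.range (N+1), (N.choose (j+1) : ℤ) * (((N:ℤ) - 2*j - 1) * ((N:ℤ) - 2*j - 2)) :=
      Finset.sum_add_distrib
    have split2 : (∑ j ∈ Finset.range (N+1), ((N.choose j : ℤ) * (((N:ℤ) - 2*j - 1) * ((N:ℤ) - 2*j - 2))
            + (N.choose j : ℤ) * (((N:ℤ) - 2*j + 1) * ((N:ℤ) - 2*j))))
        = (∑ j ∈ Finset.range (N+1), (N.choose j : ℤ) * (((N:ℤ) - 2*j - 1) * ((N:ℤ) - 2*j - 2)))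
          + ∑ j ∈ Finset.range (N+1), (N.choose j : ℤ) * (((N:ℤ) - 2*j + 1) * ((N:ℤ) - 2*j)) :=
      Finset.sum_add_distrib
    push_cast at key ⊢
    rw [key]
    push_cast at split split2 sp key2
    linear_combination split + key2 - split2 + sp

lemma lemB (N : ℕ) : ∑ j ∈ Finset.range (N+1),
    (N.choose j : ℤ) * ((N:ℤ) - 2*j) * ((N:ℤ) - 2*j + 1) = N * 2^N := by
  have h := lemA N
  rw [← Finset.sum_range_reflect] at h
  rw [← h]
  apply Finset.sum_congr rfl
  intro j hj
  have hjN : j ≤ N := by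
    have := Finset.mem_range.mp hj; omega
  have h1 : N + 1 - 1 - j = N - j := by omega
  rw [h1, Nat.choose_symm hjN]
  have h2 : ((N - j : ℕ) : ℤ) = (N : ℤ) - j := by
    push_cast [hjN]; ring
  rw [h2]; ring
lemma SAZ (M : ℕ) : ∑ k ∈ Finset.range (M+1),
    ((M+1).choose (k+1) : ℤ) * (((M:ℤ) - 2*k) * ((M:ℤ) - 2*k - 1))
    = ((M:ℤ)+1) * 2^(M+1) - ((M:ℤ)+1) * ((M:ℤ)+2) := by
  have h := lemB (M+1)
  rw [Finset.sum_range_succ'] at h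
  push_cast at h
  have e : ∑ k ∈ Finset.range (M+1),
      ((M+1).choose (k+1) : ℤ) * (((M:ℤ)+1) - 2*((k:ℤ)+1)) * (((M:ℤ)+1) - 2*((k:ℤ)+1) + 1)
      = ∑ k ∈ Finset.range (M+1),
      ((M+1).choose (k+1) : ℤ) * (((M:ℤ) - 2*k) * ((M:ℤ) - 2*k - 1)) := by
    apply Finset.sum_congr rfl; intro j hj; ring
  rw [e] at h
  simp only [Nat.choose_zero_right, Nat.cast_one] at h
  -- (cast already normalized)
  linarith

lemma SBZ (M : ℕ) : ∑ k ∈ Finset.range (M+1),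
    ((M+1).choose k : ℤ) * (((M:ℤ) - 2*k) * ((M:ℤ) - 2*k + 1))
    = ((M:ℤ)+1) * 2^(M+1) - ((M:ℤ)+1) * ((M:ℤ)+2) := by
  have h := lemA (M+1)
  rw [Finset.sum_range_succ] at h
  push_cast at h
  have e : ∑ k ∈ Finset.range (M+1),
      ((M+1).choose k : ℤ) * (((M:ℤ)+1) - 2*(k:ℤ)) * (((M:ℤ)+1) - 2*(k:ℤ) - 1)
      = ∑ k ∈ Finset.range (M+1),
      ((M+1).choose k : ℤ) * (((M:ℤ) - 2*k) * ((M:ℤ) - 2*k + 1)) := by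
    apply Finset.sum_congr rfl; intro j hj; ring
  rw [e] at h
  simp only [Nat.choose_self, Nat.cast_one] at h
  -- (cast already normalized)
  linarith

lemma pt (M k : ℕ) (hk : k ≤ M) :
    (1 / 2 ^ (M + 3) : ℝ) *
        ((M.choose k : ℝ) *
          ((((M : ℤ) - 2 * k - 1 : ℤ) : ℝ) / Real.sqrt (k + 1) +
            (((M : ℤ) - 2 * k + 1 : ℤ) : ℝ) / Real.sqrt ((M : ℝ) - k + 1)) ^ 2) +
      (1 / 2 : ℝ) *
        ((((((M : ℤ) - 2 * k) ^ 2 - 1 : ℤ) : ℝ) / 2 ^ (M + 2)) * (M.choose k : ℝ) *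
          (((M : ℝ) + 2 - 2 * Real.sqrt (((M : ℝ) - k + 1) * (k + 1))) /
            (((M : ℝ) - k + 1) * (k + 1))))
    = (1 / (((M : ℝ) + 1) * 2 ^ (M + 2))) *
        (((M + 1).choose (k + 1) : ℝ) * (((M : ℝ) - 2 * k) * ((M : ℝ) - 2 * k - 1)) +
          ((M + 1).choose k : ℝ) * (((M : ℝ) - 2 * k) * ((M : ℝ) - 2 * k + 1))) := by
  have hkM : (k : ℝ) ≤ (M : ℝ) := by exact_mod_cast hk
  have hk1 : (0 : ℝ) < (k : ℝ) + 1 := by positivity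
  have hM1 : (0 : ℝ) < (M : ℝ) - k + 1 := by linarith
  set s := Real.sqrt ((k : ℝ) + 1) with hsdef
  set t := Real.sqrt ((M : ℝ) - k + 1) with htdef
  have hs2 : s ^ 2 = (k : ℝ) + 1 := Real.sq_sqrt hk1.le
  have ht2 : t ^ 2 = (M : ℝ) - k + 1 := Real.sq_sqrt hM1.le
  have hs0 : 0 < s := Real.sqrt_pos.mpr hk1
  have ht0 : 0 < t := Real.sqrt_pos.mpr hM1
  have hst : Real.sqrt (((M : ℝ) - k + 1) * ((k : ℝ) + 1)) = t * s :=
    Real.sqrt_mul hM1.le _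
  have hb1 : ((M : ℝ) + 1) * (M.choose k : ℝ) = ((M + 1).choose (k + 1) : ℝ) * s ^ 2 := by
    rw [hs2]
    exact_mod_cast Nat.add_one_mul_choose_eq M k
  have hb2 : ((M : ℝ) + 1) * (M.choose k : ℝ) = ((M + 1).choose k : ℝ) * t ^ 2 := by
    rw [ht2]
    have h := congrArg (Nat.cast : ℕ → ℝ) (Nat.choose_mul_succ_eq M k)
    push_cast [Nat.cast_sub (show k ≤ M + 1 by omega)] at h
    linear_combination h
  have hM0 : ((M : ℝ) + 1) ≠ 0 := by positivity
  have hC : (M.choose k : ℝ) = ((M + 1).choose (k + 1) : ℝ) * s ^ 2 / ((M : ℝ) + 1) := by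
    field_simp
    linear_combination hb1
  have hB2 : ((M + 1).choose k : ℝ) = ((M + 1).choose (k + 1) : ℝ) * s ^ 2 / t ^ 2 := by
    field_simp
    linear_combination hb1 - hb2
  push_cast
  rw [hst, hC, hB2,
    show ((M : ℝ) - k + 1) * ((k : ℝ) + 1) = t ^ 2 * s ^ 2 by rw [hs2, ht2],
    show (M : ℝ) + 2 = t ^ 2 + s ^ 2 by rw [hs2, ht2]; ring]
  field_simp
  ring

open Real

theorem pbt_fidelity_plus_half_delta_eq_one (M : ℕ) :
    (1 / 2 ^ (M + 3) : ℝ) *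
        ∑ k ∈ Finset.range (M + 1),
          (M.choose k : ℝ) *
            ((((M : ℤ) - 2 * k - 1 : ℤ) : ℝ) / Real.sqrt (k + 1) +
              (((M : ℤ) - 2 * k + 1 : ℤ) : ℝ) / Real.sqrt (M - k + 1)) ^ 2 +
      (1 / 2 : ℝ) *
        (((M : ℝ) + 2) / 2 ^ M +
          ∑ k ∈ Finset.range (M + 1),
            (((((M : ℤ) - 2 * k) ^ 2 - 1 : ℤ) : ℝ) / 2 ^ (M + 2)) * (M.choose k : ℝ) *
              (((M : ℝ) + 2 - 2 * Real.sqrt (((M : ℝ) - k + 1) * (k + 1))) /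
                (((M : ℝ) - k + 1) * (k + 1))) ) = 1 := by
  set f : ℕ → ℝ := fun k =>
    (M.choose k : ℝ) *
      ((((M : ℤ) - 2 * k - 1 : ℤ) : ℝ) / Real.sqrt (k + 1) +
        (((M : ℤ) - 2 * k + 1 : ℤ) : ℝ) / Real.sqrt ((M : ℝ) - k + 1)) ^ 2 with hf
  set g : ℕ → ℝ := fun k =>
    (((((M : ℤ) - 2 * k) ^ 2 - 1 : ℤ) : ℝ) / 2 ^ (M + 2)) * (M.choose k : ℝ) *
      (((M : ℝ) + 2 - 2 * Real.sqrt (((M : ℝ) - k + 1) * (k + 1))) /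
        (((M : ℝ) - k + 1) * (k + 1))) with hg
  have key : ∑ k ∈ Finset.range (M + 1),
      ((1 / 2 ^ (M + 3) : ℝ) * f k + (1 / 2 : ℝ) * g k)
      = 1 - ((M : ℝ) + 2) / 2 ^ (M + 1) := by
    have e : ∀ k ∈ Finset.range (M + 1),
        (1 / 2 ^ (M + 3) : ℝ) * f k + (1 / 2 : ℝ) * g k
        = (1 / (((M : ℝ) + 1) * 2 ^ (M + 2))) *
            (((M + 1).choose (k + 1) : ℝ) * (((M : ℝ) - 2 * k) * ((M : ℝ) - 2 * k - 1)) +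
              ((M + 1).choose k : ℝ) * (((M : ℝ) - 2 * k) * ((M : ℝ) - 2 * k + 1))) := by
      intro k hk
      exact pt M k (by have := Finset.mem_range.mp hk; omega)
    rw [Finset.sum_congr rfl e, ← Finset.mul_sum, Finset.sum_add_distrib]
    have cA : (∑ k ∈ Finset.range (M + 1),
        (((M + 1).choose (k + 1) : ℝ) * (((M : ℝ) - 2 * k) * ((M : ℝ) - 2 * k - 1))))
        = ((M : ℝ) + 1) * 2 ^ (M + 1) - ((M : ℝ) + 1) * ((M : ℝ) + 2) := by
      exact_mod_cast congrArg (fun z : ℤ => (z : ℝ)) (SAZ M)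
    have cB : (∑ k ∈ Finset.range (M + 1),
        (((M + 1).choose k : ℝ) * (((M : ℝ) - 2 * k) * ((M : ℝ) - 2 * k + 1))))
        = ((M : ℝ) + 1) * 2 ^ (M + 1) - ((M : ℝ) + 1) * ((M : ℝ) + 2) := by
      exact_mod_cast congrArg (fun z : ℤ => (z : ℝ)) (SBZ M)
    rw [cA, cB]
    have h1 : ((M : ℝ) + 1) ≠ 0 := by positivity
    have h2 : (2 : ℝ) ^ (M + 1) ≠ 0 := by positivity
    field_simp
    ring
  have e1 : (1 / 2 ^ (M + 3) : ℝ) * ∑ k ∈ Finset.range (M + 1), f k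
      = ∑ k ∈ Finset.range (M + 1), (1 / 2 ^ (M + 3) : ℝ) * f k := Finset.mul_sum _ _ _
  have e2 : (1 / 2 : ℝ) * ∑ k ∈ Finset.range (M + 1), g k
      = ∑ k ∈ Finset.range (M + 1), (1 / 2 : ℝ) * g k := Finset.mul_sum _ _ _
  have e3 : ∑ k ∈ Finset.range (M + 1),
      ((1 / 2 ^ (M + 3) : ℝ) * f k + (1 / 2 : ℝ) * g k)
      = (∑ k ∈ Finset.range (M + 1), (1 / 2 ^ (M + 3) : ℝ) * f k)
        + ∑ k ∈ Finset.range (M + 1), (1 / 2 : ℝ) * g k := Finset.sum_add_distrib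
  have key2 : (1 / 2 ^ (M + 3) : ℝ) * (∑ k ∈ Finset.range (M + 1), f k)
      + (1 / 2 : ℝ) * (((M : ℝ) + 2) / 2 ^ M + ∑ k ∈ Finset.range (M + 1), g k) = 1 := by
    rw [key] at e3
    linear_combination e1 + e2 - e3
  exact key2
end

section
/- Let p, ξ be real numbers with 0 ≤ p ≤ 1 and 0 ≤ ξ ≤ 1. Let K₀ := [[1, 0], [0, √(1−p)]] and K₁ := [[0, √p], [0, 0]] be the Kraus operators of the amplitude damping channel, and let I₂ be the 2×2 identity matrix. Then (I₂ ⊗ K₀) · ρ_Γ(ξ) · (I₂ ⊗ K₀)ᴴ + (I₂ ⊗ K₁) · ρ_Γ(ξ) · (I₂ ⊗ K₁)ᴴ = ρ_sim(p,ξ), where ⊗ denotes the Kronecker product. -/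
open Matrix
open scoped Kronecker

/-- Reindex a 4×4 matrix by pairs of qubit indices, with ordering 00,01,10,11. -/
def toPair (A : Matrix (Fin 4) (Fin 4) ℂ) :
    Matrix (Fin 2 × Fin 2) (Fin 2 × Fin 2) ℂ :=
  Matrix.reindex finProdFinEquiv.symm finProdFinEquiv.symm A

/-- Kraus operator `K₀` of the amplitude damping channel. -/
noncomputable def K0 (p : ℝ) : Matrix (Fin 2) (Fin 2) ℂ :=
  !![1, 0; 0, (Real.sqrt (1 - p) : ℂ)]

/-- Kraus operator `K₁` of the amplitude damping channel. -/
noncomputable def K1 (p : ℝ) : Matrix (Fin 2) (Fin 2) ℂ :=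
  !![0, (Real.sqrt p : ℂ); 0, 0]

/-- Choi matrix of the qubit depolarizing channel with depolarizing probability `ξ`
(rows/columns ordered 00,01,10,11). -/
noncomputable def rhoGamma (ξ : ℝ) : Matrix (Fin 2 × Fin 2) (Fin 2 × Fin 2) ℂ :=
  toPair !![((1 / 2 - ξ / 4 : ℝ) : ℂ), 0, 0, ((1 / 2 - ξ / 2 : ℝ) : ℂ);
            0, ((ξ / 4 : ℝ) : ℂ), 0, 0;
            0, 0, ((ξ / 4 : ℝ) : ℂ), 0;
            ((1 / 2 - ξ / 2 : ℝ) : ℂ), 0, 0, ((1 / 2 - ξ / 4 : ℝ) : ℂ)]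

/-- Choi matrix of the M-port PBT simulation of the amplitude damping channel
(rows/columns ordered 00,01,10,11). -/
noncomputable def rhoSim (p ξ : ℝ) : Matrix (Fin 2 × Fin 2) (Fin 2 × Fin 2) ℂ :=
  toPair !![((1 / 2 - (1 - p) * ξ / 4 : ℝ) : ℂ), 0, 0,
              ((Real.sqrt (1 - p) * (1 / 2 - ξ / 2) : ℝ) : ℂ);
            0, (((1 - p) * ξ / 4 : ℝ) : ℂ), 0, 0;
            0, 0, (((1 / 2 - ξ / 4) * p + ξ / 4 : ℝ) : ℂ), 0;
            ((Real.sqrt (1 - p) * (1 / 2 - ξ / 2) : ℝ) : ℂ), 0, 0,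
              (((1 / 2 - ξ / 4) * (1 - p) : ℝ) : ℂ)]

/-- `1 ⊗ₖ K0 p` as a pair-reindexed version of an explicit 4×4 matrix. -/
lemma kron_K0 (p : ℝ) :
    (1 : Matrix (Fin 2) (Fin 2) ℂ) ⊗ₖ K0 p =
      toPair !![1, 0, 0, 0;
                0, (Real.sqrt (1 - p) : ℂ), 0, 0;
                0, 0, 1, 0;
                0, 0, 0, (Real.sqrt (1 - p) : ℂ)] := by
  ext ⟨i, j⟩ ⟨k, l⟩
  fin_cases i <;> fin_cases j <;> fin_cases k <;> fin_cases l <;>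
    (simp only [Matrix.kroneckerMap_apply, Matrix.one_apply, K0, K1,
      Matrix.cons_val', Matrix.cons_val_zero, Matrix.cons_val_one, Matrix.head_cons,
      Matrix.empty_val', Matrix.cons_val_fin_one, Matrix.head_fin_const,
      if_true, if_false, one_mul, mul_one, zero_mul, mul_zero] <;> norm_num <;> rfl)

lemma kron_K1 (p : ℝ) :
    (1 : Matrix (Fin 2) (Fin 2) ℂ) ⊗ₖ K1 p =
      toPair !![0, (Real.sqrt p : ℂ), 0, 0;
                0, 0, 0, 0;
                0, 0, 0, (Real.sqrt p : ℂ);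
                0, 0, 0, 0] := by
  ext ⟨i, j⟩ ⟨k, l⟩
  fin_cases i <;> fin_cases j <;> fin_cases k <;> fin_cases l <;>
    (simp only [Matrix.kroneckerMap_apply, Matrix.one_apply, K0, K1,
      Matrix.cons_val', Matrix.cons_val_zero, Matrix.cons_val_one, Matrix.head_cons,
      Matrix.empty_val', Matrix.cons_val_fin_one, Matrix.head_fin_const,
      if_true, if_false, one_mul, mul_one, zero_mul, mul_zero] <;> norm_num <;> rfl)

lemma toPair_mul (A B : Matrix (Fin 4) (Fin 4) ℂ) :
    toPair A * toPair B = toPair (A * B) := by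
  simp [toPair, Matrix.reindex_apply, Matrix.submatrix_mul_equiv]

lemma toPair_conjTranspose (A : Matrix (Fin 4) (Fin 4) ℂ) :
    (toPair A)ᴴ = toPair Aᴴ := by
  simp [toPair, Matrix.reindex_apply, Matrix.conjTranspose_submatrix]

lemma toPair_add (A B : Matrix (Fin 4) (Fin 4) ℂ) :
    toPair A + toPair B = toPair (A + B) := by
  simp [toPair, Matrix.submatrix_add]

set_option maxHeartbeats 1000000 in
theorem kraus_on_depolarizing_choi_eq_sim (p ξ : ℝ)
    (hp0 : 0 ≤ p) (hp1 : p ≤ 1) (hξ0 : 0 ≤ ξ) (hξ1 : ξ ≤ 1) :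
    ((1 : Matrix (Fin 2) (Fin 2) ℂ) ⊗ₖ K0 p) * rhoGamma ξ *
        ((1 : Matrix (Fin 2) (Fin 2) ℂ) ⊗ₖ K0 p)ᴴ +
      ((1 : Matrix (Fin 2) (Fin 2) ℂ) ⊗ₖ K1 p) * rhoGamma ξ *
        ((1 : Matrix (Fin 2) (Fin 2) ℂ) ⊗ₖ K1 p)ᴴ = rhoSim p ξ := by
  have h1 : (Real.sqrt (1 - p) : ℂ) * (Real.sqrt (1 - p) : ℂ) = ((1 - p : ℝ) : ℂ) := by
    rw [← Complex.ofReal_mul, Real.mul_self_sqrt (by linarith)]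
  have h2 : (Real.sqrt p : ℂ) * (Real.sqrt p : ℂ) = ((p : ℝ) : ℂ) := by
    rw [← Complex.ofReal_mul, Real.mul_self_sqrt hp0]
  rw [rhoGamma, kron_K0, kron_K1, rhoSim, toPair_conjTranspose, toPair_conjTranspose,
    toPair_mul, toPair_mul, toPair_mul, toPair_mul, toPair_add]
  refine congrArg toPair ?_
  ext i j
  fin_cases i <;> fin_cases j <;>
    simp [Matrix.mul_apply, Matrix.vecMul, dotProduct, Matrix.conjTranspose_apply,
      Matrix.vecHead, Matrix.vecTail,
      Fin.sum_univ_four, h1, h2, Complex.ext_iff, ← Complex.ofReal_mul] <;>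
    (push_cast [Real.sq_sqrt, Real.mul_self_sqrt, hp0, sub_nonneg.mpr hp1]
     try ring_nf
     try simp [Real.sq_sqrt, Real.mul_self_sqrt, hp0, sub_nonneg.mpr hp1]
     try ring)
end

section
/- Let n ≥ 1, let ψ₁, ψ₂, φ ∈ ℂⁿ be unit vectors with ⟨φ, ψ₁⟩ = 0 and ⟨φ, ψ₂⟩ = 0, and let q be a real number with 0 ≤ q ≤ 1. Define the density matrices ρ₁ := q•(ψ₁ψ₁ᴴ) + (1−q)•(φφᴴ) and ρ₂ := q•(ψ₂ψ₂ᴴ) + (1−q)•(φφᴴ), where ψψᴴ denotes the n×n matrix with entries ψ(i)·conj(ψ(j)). Then F(ρ₁, ρ₂) = q·|⟨ψ₁, ψ₂⟩| + (1−q). -/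
open Matrix
open scoped ComplexOrder

/-- Fidelity `F(ρ,σ) = Tr √(√ρ σ √ρ)` of two (positive semidefinite) matrices. -/
noncomputable def mFidelity {n : Type*} [Fintype n] [DecidableEq n]
    (ρ σ : Matrix n n ℂ) : ℝ :=
  ((msqrt (msqrt ρ * σ * msqrt ρ)).trace).re

/-- The inner product `⟨u, v⟩ = ∑ i, conj (u i) * v i`. -/
noncomputable def cinner {n : ℕ} (u v : Fin n → ℂ) : ℂ :=
  ∑ i, (starRingEnd ℂ) (u i) * v i

/-!
With `P u = vecMulVec u (star u)`, the matrices `P ψ₁` and `P φ` are orthogonal projections, so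
`√ρ₁ = √q • P ψ₁ + √(1 - q) • P φ`. Since `φ ⊥ ψ₂`, the sandwich `√ρ₁ ρ₂ √ρ₁` collapses to
`(q ‖⟨ψ₁, ψ₂⟩‖)² • P ψ₁ + (1 - q)² • P φ`, whose square root and trace are read off the same way.
-/

lemma cinner_eq_star_dotProduct {n : ℕ} (u v : Fin n → ℂ) : cinner u v = star u ⬝ᵥ v := rfl

section
variable {ι : Type*} [Fintype ι]

lemma star_dotProduct_swap (u v : ι → ℂ) : star v ⬝ᵥ u = star (star u ⬝ᵥ v) := by
  rw [← star_dotProduct_star, star_star]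

lemma star_dotProduct_eq_zero_comm {u v : ι → ℂ} (h : star u ⬝ᵥ v = 0) : star v ⬝ᵥ u = 0 := by
  rw [star_dotProduct_swap, h, star_zero]

lemma vecMulVec_star_mul_self {u : ι → ℂ} (hu : star u ⬝ᵥ u = 1) :
    vecMulVec u (star u) * vecMulVec u (star u) = vecMulVec u (star u) := by
  rw [vecMulVec_mul_vecMulVec, hu, one_smul]

lemma vecMulVec_star_mul_of_orthogonal {u v : ι → ℂ} (huv : star u ⬝ᵥ v = 0) :
    vecMulVec u (star u) * vecMulVec v (star v) = 0 := by
  rw [vecMulVec_mul_vecMulVec, huv, zero_smul, vecMulVec_zero]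

lemma trace_smul_vecMulVec_star_add {u v : ι → ℂ} (hu : star u ⬝ᵥ u = 1)
    (hv : star v ⬝ᵥ v = 1) (a b : ℝ) :
    (a • vecMulVec u (star u) + b • vecMulVec v (star v)).trace = (a + b : ℝ) := by
  simp only [trace_add, trace_smul, trace_vecMulVec, dotProduct_comm _ (star _), hu, hv,
    Complex.real_smul, mul_one, Complex.ofReal_add]

lemma smul_add_smul_mul_smul_add_smul {R A : Type*} [CommSemiring R] [Semiring A] [Algebra R A]
    {p q : A} (hp : p * p = p) (hq : q * q = q) (hpq : p * q = 0) (hqp : q * p = 0)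
    (a b c d : R) : (a • p + b • q) * (c • p + d • q) = (a * c) • p + (b * d) • q := by
  simp only [add_mul, mul_add, smul_mul_smul_comm, hp, hq, hpq, hqp, smul_zero, add_zero,
    zero_add]

lemma vecMulVec_star_mixture_sandwich {u v w : ι → ℂ}
    (hw : star w ⬝ᵥ w = 1) (hwu : star w ⬝ᵥ u = 0) (hwv : star w ⬝ᵥ v = 0) (a b s t : ℝ) :
    (a • vecMulVec u (star u) + b • vecMulVec w (star w)) *
        (s • vecMulVec v (star v) + t • vecMulVec w (star w)) *
        (a • vecMulVec u (star u) + b • vecMulVec w (star w)) =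
      (a ^ 2 * s * ‖star u ⬝ᵥ v‖ ^ 2) • vecMulVec u (star u) +
        (b ^ 2 * t) • vecMulVec w (star w) := by
  have huw := star_dotProduct_eq_zero_comm hwu
  have hvw := star_dotProduct_eq_zero_comm hwv
  have hc : (star u ⬝ᵥ v) • (star v ⬝ᵥ u) = ((‖star u ⬝ᵥ v‖ ^ 2 : ℝ) : ℂ) := by
    rw [star_dotProduct_swap u v, smul_eq_mul]
    exact_mod_cast Complex.mul_conj' _
  simp only [add_mul, mul_add, smul_mul_assoc, mul_smul_comm, vecMulVec_mul_vecMulVec, hw, hwu,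
    hwv, huw, hvw, smul_dotProduct, one_smul, zero_smul, smul_zero, vecMulVec_zero, add_zero,
    zero_add]
  rw [vecMulVec_smul, hc, ← Complex.coe_smul]
  module

variable [DecidableEq ι]

/-- `msqrt` is the continuous functional calculus square root, so uniqueness of positive
square roots applies. -/
lemma msqrt_eq_of_mul_self_s12 {A B : Matrix ι ι ℂ} (hB : B.PosSemidef) (h : B * B = A) :
    msqrt A = B := by
  have hA : A.PosSemidef := by
    rw [← h]
    nth_rw 1 [← hB.1.eq]
    exact posSemidef_conjTranspose_mul_self B
  open scoped MatrixOrder in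
  have hsqrt : CFC.sqrt A = B := CFC.sqrt_unique h hB.nonneg
  open scoped MatrixOrder in
  rw [CFC.sqrt_eq_real_sqrt A hA.nonneg, cfcₙ_eq_cfc, hA.1.cfc_eq, IsHermitian.cfc,
    Unitary.conjStarAlgAut_apply] at hsqrt
  rw [msqrt, dif_pos hA, ← hsqrt]
  rfl

lemma msqrt_smul_add_smul {u v : ι → ℂ} (hu : star u ⬝ᵥ u = 1) (hv : star v ⬝ᵥ v = 1)
    (huv : star u ⬝ᵥ v = 0) {a b : ℝ} (ha : 0 ≤ a) (hb : 0 ≤ b) :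
    msqrt (a • vecMulVec u (star u) + b • vecMulVec v (star v)) =
      √a • vecMulVec u (star u) + √b • vecMulVec v (star v) := by
  apply msqrt_eq_of_mul_self_s12
  · exact ((posSemidef_vecMulVec_self_star u).smul (Real.sqrt_nonneg a)).add
      ((posSemidef_vecMulVec_self_star v).smul (Real.sqrt_nonneg b))
  · rw [smul_add_smul_mul_smul_add_smul (vecMulVec_star_mul_self hu) (vecMulVec_star_mul_self hv)
      (vecMulVec_star_mul_of_orthogonal huv)
      (vecMulVec_star_mul_of_orthogonal (star_dotProduct_eq_zero_comm huv)),
      Real.mul_self_sqrt ha, Real.mul_self_sqrt hb]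

end

theorem fidelity_rank_two_mixtures_general (n : ℕ) (ψ₁ ψ₂ φ : Fin n → ℂ)
    (hψ₁ : cinner ψ₁ ψ₁ = 1) (hφ : cinner φ φ = 1)
    (horth₁ : cinner φ ψ₁ = 0) (horth₂ : cinner φ ψ₂ = 0)
    (q : ℝ) (hq0 : 0 ≤ q) (hq1 : q ≤ 1)
    (ρ₁ ρ₂ : Matrix (Fin n) (Fin n) ℂ)
    (hρ₁ : ρ₁ = q • Matrix.vecMulVec ψ₁ (star ψ₁) + (1 - q) • Matrix.vecMulVec φ (star φ))
    (hρ₂ : ρ₂ = q • Matrix.vecMulVec ψ₂ (star ψ₂) + (1 - q) • Matrix.vecMulVec φ (star φ)) :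
    mFidelity ρ₁ ρ₂ = q * ‖cinner ψ₁ ψ₂‖ + (1 - q) := by
  rw [cinner_eq_star_dotProduct] at hψ₁ hφ horth₁ horth₂ ⊢
  have h1q : 0 ≤ 1 - q := sub_nonneg.mpr hq1
  have hψ₁φ := star_dotProduct_eq_zero_comm horth₁
  have hsqrt₁ : msqrt ρ₁ = √q • vecMulVec ψ₁ (star ψ₁) + √(1 - q) • vecMulVec φ (star φ) :=
    hρ₁ ▸ msqrt_smul_add_smul hψ₁ hφ hψ₁φ hq0 h1q
  have hmiddle : msqrt ρ₁ * ρ₂ * msqrt ρ₁ =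
      (q * ‖star ψ₁ ⬝ᵥ ψ₂‖) ^ 2 • vecMulVec ψ₁ (star ψ₁) + (1 - q) ^ 2 • vecMulVec φ (star φ) := by
    rw [hsqrt₁, hρ₂, vecMulVec_star_mixture_sandwich hφ horth₁ horth₂,
      Real.sq_sqrt hq0, Real.sq_sqrt h1q]
    congr 2 <;> ring
  rw [mFidelity, hmiddle, msqrt_smul_add_smul hψ₁ hφ hψ₁φ (sq_nonneg _) (sq_nonneg _),
    Real.sqrt_sq (by positivity), Real.sqrt_sq h1q, trace_smul_vecMulVec_star_add hψ₁ hφ,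
    Complex.ofReal_re]

theorem fidelity_rank_two_mixtures (n : ℕ) (hn : 1 ≤ n) (ψ₁ ψ₂ φ : Fin n → ℂ)
    (hψ₁ : cinner ψ₁ ψ₁ = 1) (hψ₂ : cinner ψ₂ ψ₂ = 1) (hφ : cinner φ φ = 1)
    (horth₁ : cinner φ ψ₁ = 0) (horth₂ : cinner φ ψ₂ = 0)
    (q : ℝ) (hq0 : 0 ≤ q) (hq1 : q ≤ 1)
    (ρ₁ ρ₂ : Matrix (Fin n) (Fin n) ℂ)
    (hρ₁ : ρ₁ = q • Matrix.vecMulVec ψ₁ (star ψ₁) + (1 - q) • Matrix.vecMulVec φ (star φ))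
    (hρ₂ : ρ₂ = q • Matrix.vecMulVec ψ₂ (star ψ₂) + (1 - q) • Matrix.vecMulVec φ (star φ)) :
    mFidelity ρ₁ ρ₂ = q * ‖cinner ψ₁ ψ₂‖ + (1 - q) :=
  fidelity_rank_two_mixtures_general n ψ₁ ψ₂ φ hψ₁ hφ horth₁ horth₂ q hq0 hq1 ρ₁ ρ₂ hρ₁ hρ₂
end
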